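/- In Γ_log, for every α ∈ Ψ the element α + 2(s(α) − α) exceeds every element of Ψ: explicitly, for every k ∈ ℕ and every nonzero γ ∈ Γ_log, χ_[0,k] + 2·e_{k+1} > ψ(γ). -/
import Mathlib


noncomputable section

/-- Γ_log : the additive group of finitely supported functions ℕ → ℝ,
linearly ordered lexicographically. -/
abbrev GammaLog : Type := Lex (ℕ →₀ ℝ)

/-- χ_[0,n] : the characteristic function of {0,…,n}. -/
def chiI (n : ℕ) : GammaLog :=
  toLex (Finsupp.indicator (Finset.range (n + 1)) fun _ _ => (1 : ℝ))

/-- For nonzero α, ψ(α) = χ_[0,n] where n is the least index with α(n) ≠ 0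
(junk value when α = 0). -/
def psiL (α : GammaLog) : GammaLog := chiI (sInf {n : ℕ | ofLex α n ≠ 0})

/-- n(α) : the least index with α(n(α)) ≠ 1 (the defining set is nonempty by
finite support). -/
def nuOne (α : GammaLog) : ℕ := sInf {n : ℕ | ofLex α n ≠ 1}

/-- ∫α := α − χ_[0,n(α)]. -/
def intL (α : GammaLog) : GammaLog := α - chiI (nuOne α)

/-- s(α) := ψ(∫α). -/
def sL (α : GammaLog) : GammaLog := psiL (intL α)

/-- e_n : the characteristic function of {n}. -/
def eL (n : ℕ) : GammaLog := toLex (Finsupp.single n (1 : ℝ))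

lemma chiI_apply (n i : ℕ) : ofLex (chiI n) i = if i < n + 1 then 1 else 0 := by
  simp [chiI, Finsupp.indicator_apply, Finset.mem_range]

lemma eL_apply (n i : ℕ) : ofLex (eL n) i = if i = n then 1 else 0 := by
  simp [eL, Finsupp.single_apply, eq_comm]

lemma ofLex_sub' (a b : GammaLog) (i : ℕ) :
    ofLex (a - b) i = ofLex a i - ofLex b i := rfl

lemma ofLex_add' (a b : GammaLog) (i : ℕ) :
    ofLex (a + b) i = ofLex a i + ofLex b i := rfl

lemma ofLex_nsmul' (c : ℕ) (a : GammaLog) (i : ℕ) :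
    ofLex (c • a) i = c • ofLex a i := by
  induction c with
  | zero => simp
  | succ n ih => rw [succ_nsmul, succ_nsmul, ofLex_add', ih]

lemma nuOne_chiI (k : ℕ) : nuOne (chiI k) = k + 1 := by
  have : {n : ℕ | ofLex (chiI k) n ≠ 1} = Set.Ici (k + 1) := by
    ext n
    simp only [Set.mem_setOf_eq, chiI_apply, Set.mem_Ici]
    by_cases h : n < k + 1 <;> simp [h] <;> omega
  rw [nuOne, this, csInf_Ici]

lemma intL_chiI (k : ℕ) (i : ℕ) :
    ofLex (intL (chiI k)) i = if i = k + 1 then -1 else 0 := by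
  rw [intL, nuOne_chiI, ofLex_sub', chiI_apply, chiI_apply]
  split_ifs <;> (try norm_num) <;> omega

lemma sL_chiI (k : ℕ) : sL (chiI k) = chiI (k + 1) := by
  have : {n : ℕ | ofLex (intL (chiI k)) n ≠ 0} = {k + 1} := by
    ext n; simp [intL_chiI]
  rw [sL, psiL, this, csInf_singleton]

lemma rhs_apply (k i : ℕ) :
    ofLex (chiI k + (2 : ℕ) • eL (k + 1)) i =
      if i < k + 1 then 1 else if i = k + 1 then 2 else 0 := by
  rw [ofLex_add', ofLex_nsmul', chiI_apply, eL_apply]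
  split_ifs <;> (try norm_num) <;> omega

lemma chiI_lt_rhs (m k : ℕ) : chiI m < chiI k + (2 : ℕ) • eL (k + 1) := by
  refine ⟨min (m + 1) (k + 1), fun d hd => ?_, ?_⟩
  · have hdm : d < m + 1 := lt_of_lt_of_le hd (min_le_left _ _)
    have hdk : d < k + 1 := lt_of_lt_of_le hd (min_le_right _ _)
    rw [chiI_apply, rhs_apply, if_pos hdm, if_pos hdk]
  · rw [chiI_apply, rhs_apply]
    split_ifs <;> (try norm_num) <;> omega

/-- For α = χ_[0,k] ∈ Ψ one has s(α) − α = e_{k+1}, and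
α + 2(s(α) − α) = χ_[0,k] + 2·e_{k+1} exceeds every element ψ(γ) of Ψ. -/
theorem above_PsiSet (k : ℕ) (γ : GammaLog) (hγ : γ ≠ 0) :
    sL (chiI k) - chiI k = eL (k + 1) ∧
    psiL γ < chiI k + (2 : ℕ) • eL (k + 1) := by
  constructor
  · rw [sL_chiI]
    apply ofLex.injective
    ext i
    rw [ofLex_sub', chiI_apply, chiI_apply, eL_apply]
    split_ifs <;> (try norm_num) <;> omega
  · exact chiI_lt_rhs _ k
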